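/- arXiv:2205.07635 — 3 statements merged into one kernel-verified Lean document; each statement's English description precedes it below -/
import Mathlib

section
/- (Property D3, monotonicity of entropic weight.) Let F be a finite set, G ⊆ F nonempty with M = |G|, and 𝒬 a finite collection of subsets of F such that every Q ∈ 𝒬 contains exactly one element of G and every element of G lies in some Q ∈ 𝒬; let Pr and 𝒟 be the associated probability measure and entropic weight. Then 𝒟 is non-increasing with respect to set inclusion: if S ⊆ S' ⊆ F then 𝒟(S) ≥ 𝒟(S'). -/
open Finset

noncomputable section

/-- `Qset 𝒬 φ` is the set `𝒬_φ = {Q ∈ 𝒬 : φ ∈ Q}` of proofs of the goal `φ`. -/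
def Qset {α : Type*} [DecidableEq α] (𝒬 : Finset (Finset α)) (φ : α) :
    Finset (Finset α) :=
  𝒬.filter fun Q => φ ∈ Q

/-- `ESet 𝒬 S = E(S) = {Q ∈ 𝒬 : S ⊆ Q}`. -/
def ESet {α : Type*} [DecidableEq α] (𝒬 : Finset (Finset α)) (S : Finset α) :
    Finset (Finset α) :=
  𝒬.filter fun Q => S ⊆ Q

/-- The probability of a single proof `Q`: `Pr(Q) = 1/(M·|𝒬_φ|)` where `φ` is the
unique element of `Q ∩ G` (the goal of `Q`), written as a sum over `Q ∩ G`. -/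
def prOne {α : Type*} [DecidableEq α] (G : Finset α) (𝒬 : Finset (Finset α))
    (Q : Finset α) : ℝ :=
  ∑ φ ∈ Q ∩ G, ((G.card : ℝ) * ((Qset 𝒬 φ).card : ℝ))⁻¹

/-- The probability measure of a set of proofs, extended additively. -/
def PrM {α : Type*} [DecidableEq α] (G : Finset α) (𝒬 : Finset (Finset α))
    (A : Finset (Finset α)) : ℝ :=
  ∑ Q ∈ A, prOne G 𝒬 Q

/-- The entropic weight
`𝒟(S) = −Σ_{φ∈G} Pr(E(S)∩𝒬_φ)·log₂ Pr(E(S)∩𝒬_φ) + Pr(E(S))·log₂ Pr(E(S))`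
(in Lean, `Real.logb 2 0 = 0`, so the convention `0·log₂ 0 = 0` is automatic). -/
def entWeight {α : Type*} [DecidableEq α] (G : Finset α) (𝒬 : Finset (Finset α))
    (S : Finset α) : ℝ :=
  -∑ φ ∈ G, PrM G 𝒬 (ESet 𝒬 S ∩ Qset 𝒬 φ) *
      Real.logb 2 (PrM G 𝒬 (ESet 𝒬 S ∩ Qset 𝒬 φ)) +
    PrM G 𝒬 (ESet 𝒬 S) * Real.logb 2 (PrM G 𝒬 (ESet 𝒬 S))


/-- Key single-term inequality, natural-log version. -/
lemma keylog {x y c d : ℝ} (hx : 0 ≤ x) (hxy : x ≤ y) (hc : 0 ≤ c) (hcd : c ≤ d) :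
    x * Real.log (x + c) - x * Real.log x ≤ y * Real.log (y + d) - y * Real.log y := by
  have hd : 0 ≤ d := hc.trans hcd
  have hy : 0 ≤ y := hx.trans hxy
  rcases eq_or_lt_of_le hx with h0 | hx0
  · -- x = 0
    rw [← h0]
    simp only [zero_mul, sub_zero, zero_add, zero_sub, sub_self]
    rcases eq_or_lt_of_le hy with h0y | hy0
    · rw [← h0y]; simp
    · have : Real.log y ≤ Real.log (y + d) := Real.log_le_log hy0 (by linarith)
      nlinarith
  · have hy0 : 0 < y := lt_of_lt_of_le hx0 hxy
    -- step 1: replace c by d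
    have step1 : x * Real.log (x + c) ≤ x * Real.log (x + d) :=
      mul_le_mul_of_nonneg_left (Real.log_le_log (by linarith) (by linarith)) hx
    -- step 2: x * log((x+d)/x) ≤ y * log((y+d)/y) via concavity of log
    have hxd : (0:ℝ) < x + d := by linarith
    have hyd : (0:ℝ) < y + d := by linarith
    have hcc := strictConcaveOn_log_Ioi.concaveOn.2
      (Set.mem_Ioi.2 (show (0:ℝ) < (x + d) / x by positivity))
      (Set.mem_Ioi.2 (show (0:ℝ) < 1 by norm_num))
      (show (0:ℝ) ≤ x / y by positivity)
      (show (0:ℝ) ≤ 1 - x / y by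
        have : x / y ≤ 1 := (div_le_one hy0).2 hxy
        linarith)
      (by ring)
    have hpt : (x / y) • ((x + d) / x) + (1 - x / y) • (1:ℝ) = (y + d) / y := by
      rw [smul_eq_mul, smul_eq_mul]
      field_simp
      ring
    rw [hpt] at hcc
    simp only [smul_eq_mul, Real.log_one, mul_zero, add_zero] at hcc
    -- hcc : x / y * log ((x+d)/x) ≤ log ((y+d)/y)
    have step2 : x * Real.log ((x + d) / x) ≤ y * Real.log ((y + d) / y) := by
      have := mul_le_mul_of_nonneg_left hcc hy0.le
      calc x * Real.log ((x + d) / x) = y * (x / y * Real.log ((x + d) / x)) := by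
            field_simp
        _ ≤ y * Real.log ((y + d) / y) := this
    rw [Real.log_div hxd.ne' hx0.ne', Real.log_div hyd.ne' hy0.ne'] at step2
    nlinarith [step2]

/-- Key single-term inequality, `logb 2` version. -/
lemma keylogb {x y c d : ℝ} (hx : 0 ≤ x) (hxy : x ≤ y) (hc : 0 ≤ c) (hcd : c ≤ d) :
    x * Real.logb 2 (x + c) - x * Real.logb 2 x
      ≤ y * Real.logb 2 (y + d) - y * Real.logb 2 y := by
  have h2 : (0:ℝ) < Real.log 2 := Real.log_pos (by norm_num)
  have h := keylog hx hxy hc hcd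
  simp only [Real.logb]
  rw [show x * (Real.log (x + c) / Real.log 2) - x * (Real.log x / Real.log 2)
      = (x * Real.log (x + c) - x * Real.log x) / Real.log 2 by ring,
    show y * (Real.log (y + d) / Real.log 2) - y * (Real.log y / Real.log 2)
      = (y * Real.log (y + d) - y * Real.log y) / Real.log 2 by ring]
  gcongr

/-- Abstract entropy monotonicity. -/
lemma ent_mono {ι : Type*} [DecidableEq ι] (s : Finset ι) (x y : ι → ℝ)
    (hx : ∀ i ∈ s, 0 ≤ x i) (hxy : ∀ i ∈ s, x i ≤ y i) :
    -∑ i ∈ s, x i * Real.logb 2 (x i) + (∑ i ∈ s, x i) * Real.logb 2 (∑ i ∈ s, x i)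
      ≤ -∑ i ∈ s, y i * Real.logb 2 (y i)
        + (∑ i ∈ s, y i) * Real.logb 2 (∑ i ∈ s, y i) := by
  have rw1 : ∀ z : ι → ℝ,
      -∑ i ∈ s, z i * Real.logb 2 (z i) + (∑ i ∈ s, z i) * Real.logb 2 (∑ i ∈ s, z i)
      = ∑ i ∈ s, (z i * Real.logb 2 (z i + ∑ j ∈ s.erase i, z j)
          - z i * Real.logb 2 (z i)) := by
    intro z
    have : ∑ i ∈ s, (z i * Real.logb 2 (z i + ∑ j ∈ s.erase i, z j)
        - z i * Real.logb 2 (z i))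
        = ∑ i ∈ s, (z i * Real.logb 2 (∑ j ∈ s, z j) - z i * Real.logb 2 (z i)) := by
      refine Finset.sum_congr rfl fun i hi => ?_
      rw [Finset.add_sum_erase s z hi]
    rw [this, Finset.sum_sub_distrib, ← Finset.sum_mul]
    ring
  rw [rw1 x, rw1 y]
  refine Finset.sum_le_sum fun i hi => ?_
  exact keylogb (hx i hi) (hxy i hi)
    (Finset.sum_nonneg fun j hj => hx j (Finset.mem_of_mem_erase hj))
    (Finset.sum_le_sum fun j hj => hxy j (Finset.mem_of_mem_erase hj))

lemma prOne_nonneg {α : Type*} [DecidableEq α] (G : Finset α) (𝒬 : Finset (Finset α))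
    (Q : Finset α) : 0 ≤ prOne G 𝒬 Q :=
  Finset.sum_nonneg fun _ _ => by positivity

lemma PrM_nonneg {α : Type*} [DecidableEq α] (G : Finset α) (𝒬 : Finset (Finset α))
    (A : Finset (Finset α)) : 0 ≤ PrM G 𝒬 A :=
  Finset.sum_nonneg fun Q _ => prOne_nonneg G 𝒬 Q

lemma PrM_mono {α : Type*} [DecidableEq α] (G : Finset α) (𝒬 : Finset (Finset α))
    {A B : Finset (Finset α)} (h : A ⊆ B) : PrM G 𝒬 A ≤ PrM G 𝒬 B :=
  Finset.sum_le_sum_of_subset_of_nonneg h fun Q _ _ => prOne_nonneg G 𝒬 Q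

lemma PrM_decomp {α : Type*} [DecidableEq α] (G : Finset α) (𝒬 : Finset (Finset α))
    (hone : ∀ Q ∈ 𝒬, (Q ∩ G).card = 1) (A : Finset (Finset α)) (hA : A ⊆ 𝒬) :
    PrM G 𝒬 A = ∑ φ ∈ G, PrM G 𝒬 (A ∩ Qset 𝒬 φ) := by
  unfold PrM
  have h1 : ∀ φ, A ∩ Qset 𝒬 φ = A.filter fun Q => φ ∈ Q := by
    intro φ
    ext Q
    simp only [Finset.mem_inter, Finset.mem_filter, Qset]
    constructor
    · rintro ⟨h1, _, h3⟩; exact ⟨h1, h3⟩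
    · rintro ⟨h1, h2⟩; exact ⟨h1, hA h1, h2⟩
  simp_rw [h1, Finset.sum_filter]
  rw [Finset.sum_comm]
  refine Finset.sum_congr rfl fun Q hQ => ?_
  rw [← Finset.sum_filter, Finset.sum_const]
  have h2 : G.filter (fun φ => φ ∈ Q) = Q ∩ G := by
    ext φ; simp [Finset.mem_inter, and_comm]
  rw [h2, hone Q (hA hQ), one_smul]

/-- Property (D3): the entropic weight is non-increasing with respect to inclusion:
if `S ⊆ S' ⊆ F` then `𝒟(S) ≥ 𝒟(S')`. -/
theorem stmt7 {α : Type*} [DecidableEq α] (F G : Finset α) (𝒬 : Finset (Finset α))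
    (hGF : G ⊆ F) (hGne : G.Nonempty) (h𝒬F : ∀ Q ∈ 𝒬, Q ⊆ F)
    (hone : ∀ Q ∈ 𝒬, (Q ∩ G).card = 1)
    (hcover : ∀ φ ∈ G, ∃ Q ∈ 𝒬, φ ∈ Q)
    (S S' : Finset α) (hSS' : S ⊆ S') (hS'F : S' ⊆ F) :
    entWeight G 𝒬 S' ≤ entWeight G 𝒬 S := by
  unfold entWeight
  rw [PrM_decomp G 𝒬 hone (ESet 𝒬 S) (Finset.filter_subset _ _),
    PrM_decomp G 𝒬 hone (ESet 𝒬 S') (Finset.filter_subset _ _)]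
  refine ent_mono G _ _ (fun φ _ => PrM_nonneg G 𝒬 _) fun φ _ => ?_
  refine PrM_mono G 𝒬 (Finset.inter_subset_inter ?_ le_rfl)
  intro Q hQ
  simp only [ESet, Finset.mem_filter] at hQ ⊢
  exact ⟨hQ.1, hSS'.trans hQ.2⟩
end
end

section
/- (Key lemma for D3: coordinatewise monotonicity of the entropic-weight functional.) Let I be a nonempty finite index set and define, for a vector x = (x_i)_{i∈I} of nonnegative reals, f(x) = −Σ_{i∈I} x_i·log₂ x_i + (Σ_{i∈I} x_i)·log₂(Σ_{i∈I} x_i), with the convention 0·log₂ 0 = 0. If y = (y_i)_{i∈I} and x = (x_i)_{i∈I} satisfy 0 ≤ y_i ≤ x_i for all i ∈ I, then f(y) ≤ f(x). -/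
/-!
With `φ u = u log₂ u`, the functional is `φ (∑ i, x i) - ∑ i, φ (x i)`. Raising one coordinate
`x j` by `d ≥ 0` raises the total `S` by the same `d`, and since `φ` is convex and `x j ≤ S`,
the increment `φ (S + d) - φ S` dominates `φ (x j + d) - φ (x j)`. Raising the coordinates of
`y` to those of `x` one at a time gives the claim.
-/

open Real Finset Function

/-- `b` and `a + c` are the convex combinations of `a` and `b + c` with weights `(t, 1 - t)` and
`(1 - t, t)`, where `t = c / (b - a + c)`. -/
lemma ConvexOn.map_add_map_add_le {s : Set ℝ} {f : ℝ → ℝ} (hf : ConvexOn ℝ s f) {a b c : ℝ}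
    (ha : a ∈ s) (hbc : b + c ∈ s) (hab : a ≤ b) (hc : 0 ≤ c) :
    f b + f (a + c) ≤ f a + f (b + c) := by
  rcases (add_nonneg (sub_nonneg.2 hab) hc).eq_or_lt with hd | hd
  · obtain ⟨rfl, rfl⟩ : a = b ∧ c = 0 := ⟨by linarith, by linarith⟩
    simp
  set t := c / (b - a + c)
  have ht0 : 0 ≤ t := div_nonneg hc hd.le
  have ht1 : 0 ≤ 1 - t := by rw [sub_nonneg, div_le_one hd]; linarith
  have hb : t • a + (1 - t) • (b + c) = b := by
    simp only [t, smul_eq_mul]; field_simp; ring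
  have hac : (1 - t) • a + t • (b + c) = a + c := by
    simp only [t, smul_eq_mul]; field_simp; ring
  have h₁ := hf.2 ha hbc ht0 ht1 (by ring)
  have h₂ := hf.2 ha hbc ht1 ht0 (by ring)
  rw [hb, smul_eq_mul, smul_eq_mul] at h₁
  rw [hac, smul_eq_mul, smul_eq_mul] at h₂
  linarith

lemma convexOn_mul_logb_two : ConvexOn ℝ (Set.Ici 0) fun u : ℝ ↦ u * logb 2 u := by
  refine (convexOn_mul_log.smul (inv_nonneg.2 (log_nonneg one_le_two))).congr fun u _ ↦ ?_
  simp only [logb, smul_eq_mul]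
  ring

lemma le_of_forall_le_update {ι α β : Type*} [Fintype ι] [DecidableEq ι] [Preorder α]
    [Preorder β] {s : Set α} (hs : IsUpperSet s) {F : (ι → α) → β}
    (hF : ∀ g : ι → α, (∀ i, g i ∈ s) → ∀ j b, g j ≤ b → F g ≤ F (update g j b))
    {x y : ι → α} (hy : ∀ i, y i ∈ s) (hyx : y ≤ x) : F y ≤ F x := by
  suffices h : ∀ t : Finset ι, F y ≤ F (t.piecewise x y) by
    simpa using h univ
  intro t
  induction t using Finset.induction_on with
  | empty => simp
  | @insert j t hj ih =>
    have hmem : ∀ i, t.piecewise x y i ∈ s := fun i ↦ by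
      by_cases hi : i ∈ t
      · rw [piecewise_eq_of_mem _ _ _ hi]; exact hs (hyx i) (hy i)
      · rw [piecewise_eq_of_notMem _ _ _ hi]; exact hy i
    rw [piecewise_insert]
    refine ih.trans (hF _ hmem j _ ?_)
    rw [piecewise_eq_of_notMem _ _ _ hj]
    exact hyx j

noncomputable def entropicWeight {ι : Type*} [Fintype ι] (x : ι → ℝ) : ℝ :=
  -∑ i, x i * logb 2 (x i) + (∑ i, x i) * logb 2 (∑ i, x i)

lemma entropicWeight_le_update {ι : Type*} [Fintype ι] [DecidableEq ι] {g : ι → ℝ}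
    (hg : ∀ i, 0 ≤ g i) (j : ι) {b : ℝ} (hb : g j ≤ b) :
    entropicWeight g ≤ entropicWeight (update g j b) := by
  set φ : ℝ → ℝ := fun u ↦ u * logb 2 u
  set c := ∑ i ∈ {j}ᶜ, g i
  have hrest : ∀ i ∈ ({j}ᶜ : Finset ι), update g j b i = g i :=
    fun i hi ↦ update_of_ne (by simpa using hi) _ _
  have hc : 0 ≤ c := sum_nonneg fun i _ ↦ hg i
  have hconv := convexOn_mul_logb_two.map_add_map_add_le (hg j)
    (Set.mem_Ici.2 (by linarith [hg j])) hb hc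
  change -∑ i, φ (g i) + φ (∑ i, g i) ≤ -∑ i, φ (update g j b i) + φ (∑ i, update g j b i)
  simp only [Fintype.sum_eq_add_sum_compl j, update_self, sum_congr rfl hrest,
    sum_congr rfl fun i hi ↦ congrArg φ (hrest i hi)]
  linarith

theorem stmt8_general {ι : Type*} [Fintype ι] (x y : ι → ℝ)
    (hy0 : ∀ i, 0 ≤ y i) (hyx : ∀ i, y i ≤ x i) :
    -∑ i, y i * Real.logb 2 (y i) + (∑ i, y i) * Real.logb 2 (∑ i, y i) ≤
      -∑ i, x i * Real.logb 2 (x i) + (∑ i, x i) * Real.logb 2 (∑ i, x i) := by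
  classical
  exact le_of_forall_le_update (F := entropicWeight) (isUpperSet_Ici 0)
    (fun _ hg j _ hb ↦ entropicWeight_le_update hg j hb) hy0 hyx

/-- Key lemma for (D3): the functional
`f(x) = −Σ_i x_i·log₂ x_i + (Σ_i x_i)·log₂(Σ_i x_i)` on finite families of
nonnegative reals is coordinatewise monotone: if `0 ≤ y_i ≤ x_i` for all `i`,
then `f(y) ≤ f(x)`.  (In Lean `Real.logb 2 0 = 0`, so `0·log₂ 0 = 0` holds.) -/
theorem stmt8 {ι : Type*} [Fintype ι] [Nonempty ι] (x y : ι → ℝ)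
    (hy0 : ∀ i, 0 ≤ y i) (hyx : ∀ i, y i ≤ x i) :
    -∑ i, y i * Real.logb 2 (y i) + (∑ i, y i) * Real.logb 2 (∑ i, y i) ≤
      -∑ i, x i * Real.logb 2 (x i) + (∑ i, x i) * Real.logb 2 (∑ i, x i) :=
  stmt8_general x y hy0 hyx
end

section
/- (Monotonicity of δ.) Let F be a finite set, G ⊆ F nonempty with M = |G|, and 𝒬 a finite collection of subsets of F such that every Q ∈ 𝒬 contains exactly one element of G and every element of G lies in some Q ∈ 𝒬; let 𝒟 be the associated entropic weight. For Q ∈ 𝒬 and 0 ≤ k ≤ |Q|, define δ(Q,k) = max{𝒟(S) : S ⊆ Q, |S| = k}. Then δ(Q,·) is non-increasing in k: for 0 ≤ k < |Q|, δ(Q, k+1) ≤ δ(Q, k). -/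
open Finset

noncomputable section


lemma onevar_mono (r : ℝ) (hr : 0 ≤ r) :
    MonotoneOn (fun x : ℝ => (r + x) * Real.log (r + x) - x * Real.log x) (Set.Ici 0) := by
  have hderiv : ∀ x : ℝ, 0 < x →
      HasDerivAt (fun y : ℝ => (r + y) * Real.log (r + y) - y * Real.log y)
        ((Real.log (r + x) + 1) - (Real.log x + 1)) x := by
    intro x hx0
    have hrx : r + x ≠ 0 := by positivity
    have h1 : HasDerivAt (fun y : ℝ => (r + y) * Real.log (r + y))
        (Real.log (r + x) + 1) x := by
      have := (Real.hasDerivAt_mul_log hrx).comp x ((hasDerivAt_id x).const_add r)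
      simpa [Function.comp_def] using this
    exact h1.sub (Real.hasDerivAt_mul_log hx0.ne')
  apply monotoneOn_of_deriv_nonneg (convex_Ici 0)
  · exact ((Real.continuous_mul_log.comp (continuous_const.add continuous_id)).sub
      Real.continuous_mul_log).continuousOn
  · intro x hx
    rw [interior_Ici] at hx
    exact (hderiv x hx).differentiableAt.differentiableWithinAt
  · intro x hx
    rw [interior_Ici] at hx
    rw [(hderiv x hx).deriv]
    have : Real.log x ≤ Real.log (r + x) := Real.log_le_log hx (by linarith)
    linarith

lemma onevar (r a b : ℝ) (hr : 0 ≤ r) (ha : 0 ≤ a) (hab : a ≤ b) :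
    -(a * Real.log a) + (r + a) * Real.log (r + a)
      ≤ -(b * Real.log b) + (r + b) * Real.log (r + b) := by
  have := onevar_mono r hr (Set.mem_Ici.2 ha) (Set.mem_Ici.2 (ha.trans hab)) hab
  simp only at this
  linarith

lemma core {ι : Type*} (s : Finset ι) (a b : ι → ℝ)
    (ha : ∀ i ∈ s, 0 ≤ a i) (hab : ∀ i ∈ s, a i ≤ b i) (c : ℝ) (hc : 0 ≤ c) :
    -∑ i ∈ s, a i * Real.log (a i) +
        (c + ∑ i ∈ s, a i) * Real.log (c + ∑ i ∈ s, a i)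
      ≤ -∑ i ∈ s, b i * Real.log (b i) +
        (c + ∑ i ∈ s, b i) * Real.log (c + ∑ i ∈ s, b i) := by
  classical
  induction s using Finset.induction_on generalizing c with
  | empty => simp
  | insert x s hx ih =>
    have ha' : ∀ i ∈ s, 0 ≤ a i := fun i hi => ha i (mem_insert_of_mem hi)
    have hab' : ∀ i ∈ s, a i ≤ b i := fun i hi => hab i (mem_insert_of_mem hi)
    have hax : 0 ≤ a x := ha x (mem_insert_self x s)
    have habx : a x ≤ b x := hab x (mem_insert_self x s)
    have hB : 0 ≤ ∑ i ∈ s, b i :=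
      Finset.sum_nonneg fun i hi => (ha' i hi).trans (hab' i hi)
    rw [Finset.sum_insert hx, Finset.sum_insert hx, Finset.sum_insert hx,
      Finset.sum_insert hx]
    set A := ∑ i ∈ s, a i with hA
    set B := ∑ i ∈ s, b i with hBdef
    have ih1 := ih ha' hab' (c + a x) (by linarith)
    have h2 := onevar (c + B) (a x) (b x) (by linarith) hax habx
    rw [show c + (a x + A) = c + a x + A by ring,
      show c + (b x + B) = c + B + b x by ring]
    rw [show c + a x + B = c + B + a x by ring] at ih1
    linarith



/-- `delta G 𝒬 Q k = δ(Q,k) = max{𝒟(S) : S ⊆ Q, |S| = k}` (the maximum of the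
entropic weights of the `k`-element subsets of `Q`; when `k ≤ |Q|` the set of
such subsets is nonempty, and the default value `0` is never used). -/
def delta {α : Type*} [DecidableEq α] (G : Finset α) (𝒬 : Finset (Finset α))
    (Q : Finset α) (k : ℕ) : ℝ :=
  (((Q.powersetCard k).image (entWeight G 𝒬)).max).unbotD 0


lemma ESet_anti {α : Type*} [DecidableEq α] (𝒬 : Finset (Finset α))
    {S S' : Finset α} (h : S ⊆ S') : ESet 𝒬 S' ⊆ ESet 𝒬 S := by
  intro Q hQ
  simp only [ESet, Finset.mem_filter] at hQ ⊢
  exact ⟨hQ.1, h.trans hQ.2⟩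

lemma PrM_split {α : Type*} [DecidableEq α] (G : Finset α) (𝒬 : Finset (Finset α))
    (hone : ∀ Q ∈ 𝒬, (Q ∩ G).card = 1) (S : Finset α) :
    PrM G 𝒬 (ESet 𝒬 S) = ∑ φ ∈ G, PrM G 𝒬 (ESet 𝒬 S ∩ Qset 𝒬 φ) := by
  classical
  have hE : ∀ φ, ESet 𝒬 S ∩ Qset 𝒬 φ = (ESet 𝒬 S).filter (fun Q => φ ∈ Q) := by
    intro φ
    ext Q
    simp only [ESet, Qset, Finset.mem_inter, Finset.mem_filter]
    tauto
  calc PrM G 𝒬 (ESet 𝒬 S) = ∑ Q ∈ ESet 𝒬 S, prOne G 𝒬 Q := rfl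
    _ = ∑ Q ∈ ESet 𝒬 S, ∑ φ ∈ G, if φ ∈ Q then prOne G 𝒬 Q else 0 := by
        apply Finset.sum_congr rfl
        intro Q hQ
        rw [← Finset.sum_filter, Finset.sum_const,
          Finset.filter_mem_eq_inter, Finset.inter_comm,
          hone Q (Finset.mem_filter.1 hQ).1, one_smul]
    _ = ∑ φ ∈ G, ∑ Q ∈ ESet 𝒬 S, if φ ∈ Q then prOne G 𝒬 Q else 0 := Finset.sum_comm
    _ = ∑ φ ∈ G, PrM G 𝒬 (ESet 𝒬 S ∩ Qset 𝒬 φ) := by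
        apply Finset.sum_congr rfl
        intro φ _
        rw [hE φ, PrM, Finset.sum_filter]

lemma entWeight_anti {α : Type*} [DecidableEq α] (G : Finset α) (𝒬 : Finset (Finset α))
    (hone : ∀ Q ∈ 𝒬, (Q ∩ G).card = 1) {S S' : Finset α} (h : S ⊆ S') :
    entWeight G 𝒬 S' ≤ entWeight G 𝒬 S := by
  classical
  set a : α → ℝ := fun φ => PrM G 𝒬 (ESet 𝒬 S' ∩ Qset 𝒬 φ) with ha_def
  set b : α → ℝ := fun φ => PrM G 𝒬 (ESet 𝒬 S ∩ Qset 𝒬 φ) with hb_def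
  have ha : ∀ φ ∈ G, 0 ≤ a φ := fun φ _ => PrM_nonneg _ _ _
  have hab : ∀ φ ∈ G, a φ ≤ b φ := fun φ _ =>
    PrM_mono _ _ (Finset.inter_subset_inter (ESet_anti 𝒬 h) (Finset.Subset.refl _))
  have key := core G a b ha hab 0 le_rfl
  simp only [zero_add] at key
  have hS : PrM G 𝒬 (ESet 𝒬 S) = ∑ φ ∈ G, b φ := PrM_split G 𝒬 hone S
  have hS' : PrM G 𝒬 (ESet 𝒬 S') = ∑ φ ∈ G, a φ := PrM_split G 𝒬 hone S'
  have hlog2 : (0:ℝ) < Real.log 2 := Real.log_pos (by norm_num)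
  have expand : ∀ T : Finset α,
      entWeight G 𝒬 T = (-∑ φ ∈ G, PrM G 𝒬 (ESet 𝒬 T ∩ Qset 𝒬 φ) *
          Real.log (PrM G 𝒬 (ESet 𝒬 T ∩ Qset 𝒬 φ)) +
        PrM G 𝒬 (ESet 𝒬 T) * Real.log (PrM G 𝒬 (ESet 𝒬 T))) / Real.log 2 := by
    intro T
    have h2 : Real.log 2 ≠ 0 := hlog2.ne'
    have hpt : ∀ x : ℝ, x * Real.logb 2 x = x * Real.log x / Real.log 2 := by
      intro x; rw [Real.logb]; ring
    simp only [entWeight, hpt, ← Finset.sum_div, neg_div, add_div]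
  rw [expand S, expand S', div_le_div_iff_of_pos_right hlog2, hS, hS']
  exact key


/-- Monotonicity of `δ` -/
theorem stmt12 {α : Type*} [DecidableEq α] (F G : Finset α) (𝒬 : Finset (Finset α))
    (hGF : G ⊆ F) (hGne : G.Nonempty) (h𝒬F : ∀ Q ∈ 𝒬, Q ⊆ F)
    (hone : ∀ Q ∈ 𝒬, (Q ∩ G).card = 1)
    (hcover : ∀ φ ∈ G, ∃ Q ∈ 𝒬, φ ∈ Q)
    (Q : Finset α) (hQ : Q ∈ 𝒬) (k : ℕ) (hk : k < Q.card) :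
    delta G 𝒬 Q (k + 1) ≤ delta G 𝒬 Q k := by
  classical
  have hne1 : ((Q.powersetCard (k+1)).image (entWeight G 𝒬)).Nonempty :=
    (Finset.powersetCard_nonempty.2 hk).image _
  have hne0 : ((Q.powersetCard k).image (entWeight G 𝒬)).Nonempty :=
    (Finset.powersetCard_nonempty.2 hk.le).image _
  obtain ⟨v, hv⟩ := Finset.max_of_nonempty hne1
  obtain ⟨w, hw⟩ := Finset.max_of_nonempty hne0
  have hd1 : delta G 𝒬 Q (k+1) = v := by rw [delta, hv]; rfl
  have hd0 : delta G 𝒬 Q k = w := by rw [delta, hw]; rfl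
  obtain ⟨S', hS'mem, hS'eq⟩ := Finset.mem_image.1 (Finset.mem_of_max hv)
  rw [Finset.mem_powersetCard] at hS'mem
  obtain ⟨hS'Q, hS'card⟩ := hS'mem
  have hS'ne : S'.Nonempty := Finset.card_pos.1 (by omega)
  obtain ⟨x, hx⟩ := hS'ne
  set S := S'.erase x with hSdef
  have hSmem : S ∈ Q.powersetCard k := by
    rw [Finset.mem_powersetCard]
    constructor
    · exact (Finset.erase_subset x S').trans hS'Q
    · rw [Finset.card_erase_of_mem hx, hS'card]
      omega
  have h1 : entWeight G 𝒬 S' ≤ entWeight G 𝒬 S :=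
    entWeight_anti G 𝒬 hone (Finset.erase_subset x S')
  have h2 : entWeight G 𝒬 S ≤ w := by
    have := Finset.le_max (Finset.mem_image_of_mem (entWeight G 𝒬) hSmem)
    rw [hw] at this
    exact_mod_cast this
  rw [hd1, hd0, ← hS'eq]
  exact h1.trans h2

end
end
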